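/- Let σ1 = (u_1, …, u_m) and σ2 = (w_1, …, w_p) be routes and let δ = d(u_m, w_1) be the travel time from the last vertex of σ1 to the first vertex of σ2. Then the concatenated route is time-window feasible if and only if both parts are time-window feasible and the earliest completion of the first part allows a feasible start of the second part; formally, F(σ1 ⊕ σ2) ↔ F(σ1) ∧ F(σ2) ∧ (E(σ1) + δ ≤ L(σ2)). -/

import Mathlib

/-- Begin-of-service time at the last vertex of the route `(v :: rest)` when service at `v`
begins at time `s`: `t₁ = s`, `t_{k+1} = max (t_k + d v_k v_{k+1}) (e v_{k+1})`. -/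
def lastTime {V : Type*} (d : V → V → ℝ) (e : V → ℝ) : ℝ → V → List V → ℝ
  | s, _, [] => s
  | s, v, w :: rest => lastTime d e (max (s + d v w) (e w)) w rest

/-- Total travel time `T(σ)` along the route `(v :: rest)`. -/
def travel {V : Type*} (d : V → V → ℝ) : V → List V → ℝ
  | _, [] => 0
  | v, w :: rest => d v w + travel d w rest

/-- Latest feasible start time `L(σ) = min_{1 ≤ k ≤ n} (l(v_k) - T_k(σ))` of route `(v :: rest)`. -/
def latest {V : Type*} (d : V → V → ℝ) (l : V → ℝ) : V → List V → ℝ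
  | v, [] => l v
  | v, w :: rest => min (l v) (latest d l w rest - d v w)

/-- The schedule along route `(v :: rest)` starting at time `s` satisfies all deadline
constraints `t_k ≤ l(v_k)`. -/
def feasFrom {V : Type*} (d : V → V → ℝ) (e l : V → ℝ) : ℝ → V → List V → Prop
  | s, v, [] => s ≤ l v
  | s, v, w :: rest => s ≤ l v ∧ feasFrom d e l (max (s + d v w) (e w)) w rest

/-- `E(σ)`: begin-of-service time at the last vertex of the earliest schedule
(start time `s = e v₁`). -/
def earliestEnd {V : Type*} (d : V → V → ℝ) (e : V → ℝ) (v : V) (rest : List V) : ℝ :=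
  lastTime d e (e v) v rest

/-- `F(σ)`: the route `(v :: rest)` is time-window feasible, i.e. the earliest schedule
(start time `s = e v₁`) satisfies all deadline constraints. -/
def twFeasible {V : Type*} (d : V → V → ℝ) (e l : V → ℝ) (v : V) (rest : List V) : Prop :=
  feasFrom d e l (e v) v rest

/-!
The schedule of `σ₁ ⊕ σ₂` restricted to `σ₂` is the schedule of `σ₂` started at
`max (E σ₁ + δ) (e w₁)`. Starting later than `e w₁` can only break a deadline through the delay
itself, so once the earliest schedule of `σ₂` is feasible, a start time `s` is feasible exactly
when `s ≤ L σ₂`.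
-/

section

variable {V : Type*} (d : V → V → ℝ) (e l : V → ℝ)

theorem feasFrom_antitone (v : V) (rest : List V) : Antitone fun s => feasFrom d e l s v rest := by
  induction rest generalizing v with
  | nil => exact fun _ _ hs hf => hs.trans hf
  | cons w rest ih =>
    intro s s' hs hf
    exact ⟨hs.trans hf.1, ih w (by gcongr) hf.2⟩

theorem feasFrom_iff_le_latest {v : V} {rest : List V} (hv : feasFrom d e l (e v) v rest)
    (s : ℝ) : feasFrom d e l s v rest ↔ s ≤ latest d l v rest := by
  induction rest generalizing v s with
  | nil => rfl
  | cons w rest ih =>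
    have hw : feasFrom d e l (e w) w rest := feasFrom_antitone d e l w rest (le_max_right _ _) hv.2
    have hew : e w ≤ latest d l w rest := (ih hw _).1 hw
    simp only [feasFrom, latest, ih hw, le_min_iff, max_le_iff, hew, and_true, le_sub_iff_add_le]

theorem feasFrom_max_iff {w : V} {ws : List V} (t : ℝ) :
    feasFrom d e l (max t (e w)) w ws ↔ feasFrom d e l (e w) w ws ∧ t ≤ latest d l w ws := by
  constructor
  · intro hf
    have hw := feasFrom_antitone d e l w ws (le_max_right _ _) hf
    exact ⟨hw, (le_max_left _ _).trans ((feasFrom_iff_le_latest d e l hw _).1 hf)⟩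
  · rintro ⟨hw, ht⟩
    have hew : e w ≤ latest d l w ws := (feasFrom_iff_le_latest d e l hw _).1 hw
    exact (feasFrom_iff_le_latest d e l hw _).2 (max_le ht hew)

theorem feasFrom_append (u : V) (us : List V) (w : V) (ws : List V) (s : ℝ) :
    feasFrom d e l s u (us ++ w :: ws) ↔
      feasFrom d e l s u us ∧
        feasFrom d e l
          (max (lastTime d e s u us + d ((u :: us).getLast (List.cons_ne_nil u us)) w) (e w))
          w ws := by
  induction us generalizing u s with
  | nil => simp only [List.nil_append, feasFrom, lastTime, List.getLast_singleton]
  | cons u' us ih =>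
    simp only [List.cons_append, feasFrom, lastTime, ih, List.getLast_cons_cons, and_assoc]

end

theorem twFeasible_append_general {V : Type*} (d : V → V → ℝ) (e l : V → ℝ)
    (u : V) (us : List V) (w : V) (ws : List V) :
    twFeasible d e l u (us ++ w :: ws) ↔
      twFeasible d e l u us ∧ twFeasible d e l w ws ∧
        earliestEnd d e u us + d ((u :: us).getLast (List.cons_ne_nil u us)) w ≤
          latest d l w ws := by
  rw [twFeasible, feasFrom_append, feasFrom_max_iff]
  rfl

/-- `F(σ₁ ⊕ σ₂) ↔ F σ₁ ∧ F σ₂ ∧ E σ₁ + δ ≤ L σ₂` where `δ` is the travel time from the last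
vertex of `σ₁ = (u :: us)` to the first vertex of `σ₂ = (w :: ws)`. -/
theorem twFeasible_append {V : Type*} (d : V → V → ℝ) (e l : V → ℝ)
    (hd : ∀ u v, 0 ≤ d u v) (hel : ∀ v, e v ≤ l v)
    (u : V) (us : List V) (w : V) (ws : List V) :
    twFeasible d e l u (us ++ w :: ws) ↔
      twFeasible d e l u us ∧ twFeasible d e l w ws ∧
        earliestEnd d e u us + d ((u :: us).getLast (List.cons_ne_nil u us)) w ≤
          latest d l w ws :=
  twFeasible_append_general d e l u us w ws
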